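/- arXiv:1509.02764 — 3 statements merged into one kernel-verified Lean document; each statement's English description precedes it below -/
import Mathlib

section
/- For every complex number z ≠ 0 and every complex number ν with Re(ν) ≥ 0, the modified Bessel function of the first kind satisfies |I_ν(z)| ≤ (|z|/2)^{Re ν} · e^{|z| − Im(ν)·arg(z)} / |Γ(ν+1)|. -/
open Complex

/-- The modified Bessel function of the first kind, defined by its power series
with the principal branch of `(z/2)^(2k+ν)`. -/
noncomputable def besselI (ν z : ℂ) : ℂ :=
  ∑' k : ℕ, (z / 2) ^ (2 * (k : ℂ) + ν) / ((Nat.factorial k : ℂ) * Complex.Gamma ((k : ℂ) + ν + 1))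

/-!
With `x = ‖z‖ / 2`, the `k`-th term has norm `x ^ (2k) ‖(z/2)^ν‖ / (k! ‖Γ(k+ν+1)‖)`, and
`‖Γ(k+ν+1)‖ ≥ k! ‖Γ(ν+1)‖` because each factor `ν + j` of the Pochhammer product has real part
at least `j` when `Re ν ≥ 0`. So the series is dominated by `‖(z/2)^ν‖ / ‖Γ(ν+1)‖ · ∑ (x^k/k!)²`,
and since every `x^k/k!` is at most `e^x`, that sum is at most `e^x ∑ x^k/k! = e^(2x) = e^‖z‖`.
-/

open scoped Nat

namespace Real

theorem sq_pow_div_factorial_le_exp_mul {x : ℝ} (hx : 0 ≤ x) (k : ℕ) :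
    (x ^ k / k !) ^ 2 ≤ exp x * (x ^ k / k !) := by
  rw [sq]
  exact mul_le_mul_of_nonneg_right (pow_div_factorial_le_exp x hx k) (by positivity)

theorem summable_sq_pow_div_factorial {x : ℝ} (hx : 0 ≤ x) :
    Summable fun k : ℕ => (x ^ k / k !) ^ 2 :=
  .of_nonneg_of_le (fun _ => sq_nonneg _) (sq_pow_div_factorial_le_exp_mul hx)
    ((summable_pow_div_factorial x).mul_left _)

theorem tsum_sq_pow_div_factorial_le_exp_two_mul {x : ℝ} (hx : 0 ≤ x) :
    ∑' k : ℕ, (x ^ k / k !) ^ 2 ≤ exp (2 * x) :=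
  calc ∑' k : ℕ, (x ^ k / k !) ^ 2 ≤ ∑' k : ℕ, exp x * (x ^ k / k !) :=
        (summable_sq_pow_div_factorial hx).tsum_le_tsum (sq_pow_div_factorial_le_exp_mul hx)
          ((summable_pow_div_factorial x).mul_left _)
    _ = exp (2 * x) := by
        rw [tsum_mul_left, (NormedSpace.expSeries_div_hasSum_exp x).tsum_eq, ← exp_eq_exp_ℝ,
          ← exp_add, two_mul]

end Real

namespace Complex

theorem factorial_mul_norm_Gamma_le_norm_Gamma_add_nat {s : ℂ} (hs : 1 ≤ s.re) (k : ℕ) :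
    k ! * ‖Gamma s‖ ≤ ‖Gamma (s + k)‖ := by
  induction k with
  | zero => simp
  | succ k ih =>
    have hre : k + 1 ≤ (s + k).re := by simp only [add_re, natCast_re]; linarith
    have hne : s + k ≠ 0 := fun h => by simp only [h, zero_re] at hre; linarith
    calc ((k + 1) ! : ℝ) * ‖Gamma s‖ = (k + 1) * (k ! * ‖Gamma s‖) := by
          push_cast [Nat.factorial_succ]; ring
      _ ≤ ‖s + k‖ * ‖Gamma (s + k)‖ :=
          mul_le_mul (hre.trans (re_le_norm _)) ih (by positivity) (norm_nonneg _)
      _ = ‖Gamma (s + ↑(k + 1))‖ := by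
          rw [Nat.cast_succ, ← add_assoc, Gamma_add_one _ hne, norm_mul]

theorem norm_cpow_two_mul_nat_add {w : ℂ} (hw : w ≠ 0) (k : ℕ) (ν : ℂ) :
    ‖w ^ (2 * (k : ℂ) + ν)‖ = (‖w‖ ^ k) ^ 2 * ‖w ^ ν‖ := by
  rw [cpow_add _ _ hw, show 2 * (k : ℂ) = ((2 * k : ℕ) : ℂ) by push_cast; ring, cpow_natCast,
    norm_mul, norm_pow, ← pow_mul, mul_comm k 2]

theorem norm_besselI_term_le {w ν : ℂ} (hw : w ≠ 0) (hν : 0 ≤ ν.re) (k : ℕ) :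
    ‖w ^ (2 * (k : ℂ) + ν) / (k ! * Gamma (k + ν + 1))‖ ≤
      ‖w ^ ν‖ / ‖Gamma (ν + 1)‖ * (‖w‖ ^ k / k !) ^ 2 := by
  have hΓ : 0 < ‖Gamma (ν + 1)‖ :=
    norm_pos_iff.2 (Gamma_ne_zero_of_re_pos (by simp only [add_re, one_re]; linarith))
  have hΓk : k ! * ‖Gamma (ν + 1)‖ ≤ ‖Gamma (k + ν + 1)‖ := by
    convert factorial_mul_norm_Gamma_le_norm_Gamma_add_nat (s := ν + 1) (by simpa using hν) k
      using 3
    ring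
  rw [norm_div, norm_mul, norm_cpow_two_mul_nat_add hw, norm_natCast, div_pow,
    _root_.div_mul_div_comm, mul_comm ‖w ^ ν‖]
  refine div_le_div_of_nonneg_left (by positivity) (by positivity) ?_
  calc ‖Gamma (ν + 1)‖ * (k ! : ℝ) ^ 2 = k ! * (k ! * ‖Gamma (ν + 1)‖) := by ring
    _ ≤ k ! * ‖Gamma (k + ν + 1)‖ := by gcongr

end Complex

theorem norm_besselI_le_of_ne_zero {z : ℂ} (hz : z ≠ 0) {ν : ℂ} (hν : 0 ≤ ν.re) :
    ‖besselI ν z‖ ≤ ‖(z / 2) ^ ν‖ * Real.exp ‖z‖ / ‖Gamma (ν + 1)‖ := by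
  have hx : 0 ≤ ‖z / 2‖ := norm_nonneg _
  calc ‖besselI ν z‖
      ≤ ‖(z / 2) ^ ν‖ / ‖Gamma (ν + 1)‖ * ∑' k : ℕ, (‖z / 2‖ ^ k / k !) ^ 2 :=
        tsum_of_norm_bounded ((Real.summable_sq_pow_div_factorial hx).mul_left _).hasSum
          (norm_besselI_term_le (div_ne_zero hz two_ne_zero) hν) |>.trans_eq tsum_mul_left
    _ ≤ ‖(z / 2) ^ ν‖ / ‖Gamma (ν + 1)‖ * Real.exp (2 * ‖z / 2‖) := by
        gcongr
        exact Real.tsum_sq_pow_div_factorial_le_exp_two_mul hx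
    _ = ‖(z / 2) ^ ν‖ * Real.exp ‖z‖ / ‖Gamma (ν + 1)‖ := by
        rw [norm_div, Complex.norm_two, mul_div_cancel₀ _ two_ne_zero, div_mul_eq_mul_div]

theorem besselI_abs_bound (z ν : ℂ) (hz : z ≠ 0) (hν : 0 ≤ ν.re) :
    ‖besselI ν z‖ ≤
      (‖z‖ / 2) ^ ν.re * Real.exp (‖z‖ - ν.im * z.arg) /
        ‖Complex.Gamma (ν + 1)‖ := by
  have harg : (z / 2).arg = z.arg := by
    simpa [div_eq_mul_inv] using arg_mul_real (by norm_num : (0 : ℝ) < 2⁻¹) z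
  refine (norm_besselI_le_of_ne_zero hz hν).trans_eq ?_
  rw [norm_cpow_of_ne_zero (div_ne_zero hz two_ne_zero), norm_div, Complex.norm_two, harg,
    Real.exp_sub, mul_comm z.arg]
  ring
end

section
/- For every real x > 0 and every real τ, |I_{iτ}(x)| ≤ I_0(x) · √(sinh(πτ)/(πτ)), where for τ = 0 the factor √(sinh(πτ)/(πτ)) is interpreted as 1. -/
/-!
For `x > 0` and `Re ν ≥ 0`, the `k`-th term of `I_ν(x)` has modulus
`(x/2)^(2k + Re ν) / (k! |Γ(k + ν + 1)|)`, and `|Γ(k + ν + 1)| ≥ k! |Γ(ν + 1)|` because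
`|ν + j| ≥ j` for `j ≥ 1`. So it is dominated by `(x/2)^(Re ν) / |Γ(ν + 1)|` times the `k`-th
term of `I_0(x)`. For `ν = iτ` the reflection formula and `Γ(1 - iτ) = conj Γ(1 + iτ)` give
`|Γ(1 + iτ)|² = πτ / sinh(πτ)`.
-/

open Complex Real

open scoped Nat ComplexConjugate

namespace Complex

theorem norm_Gamma_one_add_I_mul_sq {τ : ℝ} (hτ : τ ≠ 0) :
    ‖Gamma (1 + I * τ)‖ ^ 2 = π * τ / Real.sinh (π * τ) := by
  have hIτ : I * τ ≠ 0 := by simp [hτ]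
  have hsinh : (Real.sinh (π * τ) : ℂ) ≠ 0 := by
    rw [ofReal_ne_zero, Ne, Real.sinh_eq_zero]; exact mul_ne_zero Real.pi_ne_zero hτ
  have hconj : conj (Gamma (1 + I * τ)) = Gamma (1 - I * τ) := by
    rw [← Gamma_conj]; simp [sub_eq_add_neg]
  have hsin : sin (π * (I * τ)) = I * Real.sinh (π * τ) := by
    rw [show (π : ℂ) * (I * τ) = ((π * τ : ℝ) : ℂ) * I by push_cast; ring, sin_mul_I,
      ← ofReal_sinh, mul_comm]
  have h : ((‖Gamma (1 + I * τ)‖ ^ 2 : ℝ) : ℂ) = π * τ / Real.sinh (π * τ) := by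
    rw [ofReal_pow, ← mul_conj', hconj, add_comm, Gamma_add_one _ hIτ, mul_assoc,
      Gamma_mul_Gamma_one_sub, hsin]
    field_simp
  exact_mod_cast h

theorem inv_norm_Gamma_one_add_I_mul (τ : ℝ) :
    ‖Gamma (1 + I * τ)‖⁻¹ = if τ = 0 then 1 else √(Real.sinh (π * τ) / (π * τ)) := by
  split_ifs with hτ
  · simp [hτ]
  · rw [← inv_div, Real.sqrt_inv, ← norm_Gamma_one_add_I_mul_sq hτ,
      Real.sqrt_sq (norm_nonneg _)]

theorem factorial_mul_norm_Gamma_le {s : ℂ} (hs : 1 ≤ s.re) (k : ℕ) :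
    k ! * ‖Gamma s‖ ≤ ‖Gamma (k + s)‖ := by
  induction k with
  | zero => simp
  | succ k ih =>
    have hre : (k : ℝ) + 1 ≤ (k + s).re := by simp; linarith
    have hne : k + s ≠ 0 :=
      ne_of_apply_ne re (by rw [zero_re]; exact ((Nat.cast_add_one_pos k).trans_le hre).ne')
    have hnorm : (k : ℝ) + 1 ≤ ‖k + s‖ := hre.trans (re_le_norm _)
    rw [Nat.cast_succ, add_right_comm, Gamma_add_one _ hne, norm_mul, Nat.factorial_succ,
      Nat.cast_mul, Nat.cast_succ, mul_assoc]
    gcongr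

end Complex

theorem summable_pow_two_mul_div_factorial_sq (c : ℝ) :
    Summable fun k : ℕ => c ^ (2 * k) / (k ! : ℝ) ^ 2 := by
  refine (Real.summable_pow_div_factorial (c ^ 2)).of_nonneg_of_le
    (fun k => by rw [pow_mul]; positivity) fun k => ?_
  rw [pow_mul, sq (k ! : ℝ), ← div_div]
  exact div_le_self (by positivity) (by exact_mod_cast k.factorial_pos)

theorem besselI_zero_ofReal (x : ℝ) :
    besselI 0 x = ((∑' k : ℕ, (x / 2) ^ (2 * k) / (k ! : ℝ) ^ 2 : ℝ) : ℂ) := by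
  rw [besselI, ofReal_tsum]
  refine tsum_congr fun k => ?_
  rw [add_zero, add_zero, show (2 * k : ℂ) = (2 * k : ℕ) by push_cast; ring, cpow_natCast,
    Complex.Gamma_nat_eq_factorial]
  push_cast
  ring

theorem norm_besselI_term_le {x : ℝ} (hx : 0 < x) {ν : ℂ} (hν : 0 ≤ ν.re) (k : ℕ) :
    ‖((x : ℂ) / 2) ^ (2 * (k : ℂ) + ν) / ((k ! : ℂ) * Gamma (k + ν + 1))‖ ≤
      (x / 2) ^ (2 * k) / (k ! : ℝ) ^ 2 * ((x / 2) ^ ν.re / ‖Gamma (ν + 1)‖) := by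
  have hΓ : 0 < ‖Gamma (ν + 1)‖ :=
    norm_pos_iff.mpr (Gamma_ne_zero_of_re_pos (by simp; linarith))
  have hΓk := factorial_mul_norm_Gamma_le (s := ν + 1) (by simp; linarith) k
  rw [← add_assoc] at hΓk
  have hre : (2 * (k : ℂ) + ν).re = (2 * k : ℕ) + ν.re := by simp
  rw [norm_div, norm_mul, Complex.norm_natCast,
    show (x : ℂ) / 2 = ((x / 2 : ℝ) : ℂ) by push_cast; rfl,
    norm_cpow_eq_rpow_re_of_pos (by positivity), hre, Real.rpow_add (by positivity),
    Real.rpow_natCast]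
  calc (x / 2) ^ (2 * k) * (x / 2) ^ ν.re / (k ! * ‖Gamma (k + ν + 1)‖)
      ≤ (x / 2) ^ (2 * k) * (x / 2) ^ ν.re / (k ! * (k ! * ‖Gamma (ν + 1)‖)) := by gcongr
    _ = _ := by field_simp

theorem norm_besselI_le {x : ℝ} (hx : 0 < x) {ν : ℂ} (hν : 0 ≤ ν.re) :
    ‖besselI ν x‖ ≤ (besselI 0 x).re * ((x / 2) ^ ν.re / ‖Gamma (ν + 1)‖) := by
  rw [besselI_zero_ofReal, ofReal_re, ← tsum_mul_right]
  exact tsum_of_norm_bounded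
    ((summable_pow_two_mul_div_factorial_sq (x / 2)).mul_right _).hasSum
    (norm_besselI_term_le hx hν)

theorem besselI_bound_by_besselI_zero (x τ : ℝ) (hx : 0 < x) :
    ‖besselI (Complex.I * τ) (x : ℂ)‖ ≤
      (besselI 0 (x : ℂ)).re *
        (if τ = 0 then 1 else Real.sqrt (Real.sinh (π * τ) / (π * τ))) := by
  have h := norm_besselI_le hx (ν := I * τ) (by simp)
  rwa [show (I * τ).re = 0 by simp, Real.rpow_zero, one_div, add_comm (I * τ),
    inv_norm_Gamma_one_add_I_mul] at h
end

section
/- Boundedness of the transform G: if g : ℝ → ℂ satisfies ∫_{−∞}^∞ |g(τ)| / √(cosh(πτ)) dτ < ∞, then for every x > 0 the integral (Gg)(x) = √π · e^{−x/2} ∫_{−∞}^∞ Re[I_{iτ}(x/2)] · g(τ)/cosh(πτ) dτ converges absolutely and |(Gg)(x)| ≤ √π · ∫_{−∞}^∞ |g(τ)|/√(cosh(πτ)) dτ. -/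
/-
The Bessel series is bounded term by term. The functional equation gives
`‖Γ(k + 1 + iτ)‖ ≥ k! ‖Γ(1 + iτ)‖`, and the reflection formula gives
`‖Γ(1 + iτ)‖² = πτ / sinh(πτ) ≥ 1 / cosh(πτ)` because `tanh y ≤ y`.
Hence the `k`-th term of `I_{iτ}(y)` is at most
`((y/2)^k / k!)² √cosh(πτ) ≤ (y/2)^k / k! · e^{y/2} √cosh(πτ)`,
so `‖I_{iτ}(y)‖ ≤ e^y √cosh(πτ)`. With `y = x/2`, the factor `e^{-x/2} / cosh(πτ)`
leaves the integrable majorant `‖g τ‖ / √cosh(πτ)`.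
-/

open MeasureTheory Complex Real

theorem Real.sinh_le_mul_cosh {y : ℝ} (hy : 0 ≤ y) : Real.sinh y ≤ y * Real.cosh y := by
  refine hasSum_le (fun n => ?_) (Real.hasSum_sinh y) ((Real.hasSum_cosh y).mul_left y)
  rw [mul_div_assoc', ← pow_succ']
  gcongr
  exact Nat.le_succ _

theorem Real.sinh_div_self_le_cosh (y : ℝ) : Real.sinh y / y ≤ Real.cosh y := by
  rcases lt_trichotomy y 0 with hy | rfl | hy
  · have := Real.sinh_le_mul_cosh (neg_nonneg.2 hy.le)
    rw [Real.sinh_neg, Real.cosh_neg] at this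
    rw [div_le_iff_of_neg hy]
    linarith
  · simp
  · rw [div_le_iff₀ hy]
    linarith [Real.sinh_le_mul_cosh hy.le]

theorem Complex.Gamma_one_add_mul_Gamma_one_sub {z : ℂ} (hz : z ≠ 0) :
    Gamma (1 + z) * Gamma (1 - z) = π * z / Complex.sin (π * z) := by
  rw [add_comm, Gamma_add_one z hz, mul_assoc, Gamma_mul_Gamma_one_sub]
  ring

theorem Complex.norm_Gamma_one_add_I_mul_sq_s12 {τ : ℝ} (hτ : τ ≠ 0) :
    ‖Gamma (1 + I * τ)‖ ^ 2 = π * τ / Real.sinh (π * τ) := by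
  have hconj : starRingEnd ℂ (Gamma (1 + I * τ)) = Gamma (1 - I * τ) := by
    rw [← Gamma_conj, map_add, map_mul, conj_I, conj_ofReal, map_one, neg_mul, ← sub_eq_add_neg]
  have hsin : Complex.sin (π * (I * τ)) = Real.sinh (π * τ) * I := by
    rw [← mul_assoc, mul_comm _ I, mul_assoc, ← ofReal_mul, mul_comm I, sin_mul_I, ofReal_sinh]
  apply ofReal_injective
  rw [ofReal_pow, ← mul_conj', hconj, Gamma_one_add_mul_Gamma_one_sub (by simpa using hτ), hsin]
  have hs : (Real.sinh (π * τ) : ℂ) ≠ 0 := by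
    exact_mod_cast Real.sinh_ne_zero.2 (mul_ne_zero pi_ne_zero hτ)
  rw [ofReal_div, ofReal_mul]
  field_simp

theorem Complex.inv_norm_Gamma_one_add_I_mul_le (τ : ℝ) :
    ‖Gamma (1 + I * τ)‖⁻¹ ≤ √(Real.cosh (π * τ)) := by
  rcases eq_or_ne τ 0 with rfl | hτ
  · simp
  rw [Real.le_sqrt (by positivity) (Real.cosh_pos _).le, inv_pow, norm_Gamma_one_add_I_mul_sq_s12 hτ,
    inv_div]
  exact Real.sinh_div_self_le_cosh _

theorem Complex.factorial_mul_norm_Gamma_one_add_le {z : ℂ} (hz : 0 ≤ z.re) (k : ℕ) :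
    (k.factorial : ℝ) * ‖Gamma (1 + z)‖ ≤ ‖Gamma (k + z + 1)‖ := by
  induction k with
  | zero => simp [add_comm]
  | succ n ih =>
    have hre : (n : ℝ) + 1 ≤ ‖(n : ℂ) + z + 1‖ :=
      le_trans (by simp; linarith) (re_le_norm _)
    have hne : (n : ℂ) + z + 1 ≠ 0 := by
      intro h
      rw [h, norm_zero] at hre
      linarith
    rw [Nat.factorial_succ, Nat.cast_mul, Nat.cast_succ, mul_assoc, Nat.cast_succ,
      add_right_comm _ 1 z, Gamma_add_one _ hne, norm_mul]
    gcongr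

noncomputable def besselITerm (ν z : ℂ) (k : ℕ) : ℂ :=
  (z / 2) ^ (2 * (k : ℂ) + ν) / ((Nat.factorial k : ℂ) * Complex.Gamma ((k : ℂ) + ν + 1))

theorem besselI_eq_tsum_besselITerm (ν z : ℂ) : besselI ν z = ∑' k, besselITerm ν z k := rfl

theorem continuous_besselITerm {z : ℂ} (hz : z ≠ 0) (k : ℕ) :
    Continuous fun ν => besselITerm ν z k := by
  have hpow : Continuous fun ν : ℂ => (z / 2) ^ (2 * (k : ℂ) + ν) :=
    (continuous_const.add continuous_id).const_cpow (Or.inl (div_ne_zero hz two_ne_zero))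
  have hGamma : Continuous fun ν : ℂ => (Gamma (k + ν + 1))⁻¹ := by
    simpa only [Function.comp_def, one_div] using
      differentiable_one_div_Gamma.continuous.comp (f := fun ν : ℂ => k + ν + 1) (by fun_prop)
  simp only [besselITerm, div_eq_mul_inv, mul_inv]
  fun_prop

theorem norm_besselITerm_I_mul_le {y : ℝ} (hy : 0 < y) (τ : ℝ) (k : ℕ) :
    ‖besselITerm (I * τ) y k‖ ≤
      ((y / 2) ^ k / k.factorial) ^ 2 * √(Real.cosh (π * τ)) := by
  have hnum : ‖((y : ℂ) / 2) ^ (2 * (k : ℂ) + I * τ)‖ = (y / 2) ^ (2 * k) := by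
    rw [show (y : ℂ) / 2 = ((y / 2 : ℝ) : ℂ) by push_cast; rfl,
      norm_cpow_eq_rpow_re_of_pos (by positivity)]
    simpa using Real.rpow_natCast (y / 2) (2 * k)
  have hden : (k.factorial : ℝ) ^ 2 * ‖Gamma (1 + I * τ)‖ ≤
      ‖(k.factorial : ℂ) * Gamma (k + I * τ + 1)‖ := by
    rw [norm_mul, Complex.norm_natCast, sq, mul_assoc]
    gcongr
    exact factorial_mul_norm_Gamma_one_add_le (by simp) k
  have hGamma : 0 < ‖Gamma (1 + I * τ)‖ :=
    norm_pos_iff.2 (Gamma_ne_zero_of_re_pos (by simp))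
  calc ‖besselITerm (I * τ) y k‖
      ≤ (y / 2) ^ (2 * k) / ((k.factorial : ℝ) ^ 2 * ‖Gamma (1 + I * τ)‖) := by
        rw [besselITerm, norm_div, hnum]
        gcongr
    _ = ((y / 2) ^ k / k.factorial) ^ 2 * ‖Gamma (1 + I * τ)‖⁻¹ := by
        rw [pow_mul']
        field_simp
    _ ≤ ((y / 2) ^ k / k.factorial) ^ 2 * √(Real.cosh (π * τ)) := by
        gcongr
        exact inv_norm_Gamma_one_add_I_mul_le τ

theorem hasSum_besselITerm_majorant (y τ : ℝ) :
    HasSum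
      (fun k : ℕ => (y / 2) ^ k / k.factorial * (Real.exp (y / 2) * √(Real.cosh (π * τ))))
      (Real.exp y * √(Real.cosh (π * τ))) := by
  have hexp := Real.exp_eq_exp_ℝ ▸ NormedSpace.expSeries_div_hasSum_exp (y / 2)
  have h := hexp.mul_right (Real.exp (y / 2) * √(Real.cosh (π * τ)))
  rwa [← mul_assoc, ← Real.exp_add, add_halves] at h

theorem norm_besselITerm_I_mul_le_majorant {y : ℝ} (hy : 0 < y) (τ : ℝ) (k : ℕ) :
    ‖besselITerm (I * τ) y k‖ ≤
      (y / 2) ^ k / k.factorial * (Real.exp (y / 2) * √(Real.cosh (π * τ))) := by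
  refine (norm_besselITerm_I_mul_le hy τ k).trans ?_
  rw [sq, mul_assoc]
  gcongr
  exact Real.pow_div_factorial_le_exp _ (by positivity) k

theorem summable_norm_besselITerm_I_mul {y : ℝ} (hy : 0 < y) (τ : ℝ) :
    Summable fun k => ‖besselITerm (I * τ) y k‖ :=
  (hasSum_besselITerm_majorant y τ).summable.of_nonneg_of_le (fun _ => norm_nonneg _)
    (norm_besselITerm_I_mul_le_majorant hy τ)

theorem norm_besselI_I_mul_le {y : ℝ} (hy : 0 < y) (τ : ℝ) :
    ‖besselI (I * τ) y‖ ≤ Real.exp y * √(Real.cosh (π * τ)) := by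
  rw [besselI_eq_tsum_besselITerm, ← (hasSum_besselITerm_majorant y τ).tsum_eq]
  exact (norm_tsum_le_tsum_norm (summable_norm_besselITerm_I_mul hy τ)).trans
    ((summable_norm_besselITerm_I_mul hy τ).tsum_le_tsum
      (norm_besselITerm_I_mul_le_majorant hy τ) (hasSum_besselITerm_majorant y τ).summable)

theorem measurable_besselI_I_mul {y : ℝ} (hy : 0 < y) :
    Measurable fun τ : ℝ => besselI (I * τ) y := by
  have hcont (k : ℕ) : Continuous fun τ : ℝ => besselITerm (I * τ) y k :=
    (continuous_besselITerm (ofReal_ne_zero.2 hy.ne') k).comp (by fun_prop)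
  refine measurable_of_tendsto_metrizable
    (fun n => Finset.measurable_sum (Finset.range n) fun k _ => (hcont k).measurable) ?_
  exact tendsto_pi_nhds.2 fun τ =>
    (summable_norm_besselITerm_I_mul hy τ).of_norm.hasSum.tendsto_sum_nat

theorem abs_re_besselI_I_mul_div_cosh_le {y : ℝ} (hy : 0 < y) (τ : ℝ) :
    |(besselI (I * τ) y).re / Real.cosh (π * τ)| ≤ Real.exp y / √(Real.cosh (π * τ)) := by
  have hcosh := Real.cosh_pos (π * τ)
  calc |(besselI (I * τ) y).re / Real.cosh (π * τ)|
      = |(besselI (I * τ) y).re| / Real.cosh (π * τ) := by rw [abs_div, abs_of_pos hcosh]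
    _ ≤ Real.exp y * √(Real.cosh (π * τ)) / Real.cosh (π * τ) := by
        gcongr
        exact (abs_re_le_norm _).trans (norm_besselI_I_mul_le hy τ)
    _ = Real.exp y / √(Real.cosh (π * τ)) := by
        rw [mul_div_assoc, Real.sqrt_div_self', mul_one_div]

theorem G_transform_bounded (g : ℝ → ℂ)
    (hg : Integrable (fun τ => ‖g τ‖ / Real.sqrt (Real.cosh (π * τ))))
    (hgm : Measurable g) (x : ℝ) (hx : 0 < x) :
    Integrable
        (fun τ : ℝ =>
          ((besselI (Complex.I * τ) ((x : ℂ) / 2)).re / Real.cosh (π * τ) : ℝ) • g τ) ∧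
      ‖(Real.sqrt π * Real.exp (-x / 2) : ℝ) •
          ∫ τ : ℝ,
            ((besselI (Complex.I * τ) ((x : ℂ) / 2)).re / Real.cosh (π * τ) : ℝ) • g τ‖ ≤
        Real.sqrt π * ∫ τ : ℝ, ‖g τ‖ / Real.sqrt (Real.cosh (π * τ)) := by
  have hx2 : 0 < x / 2 := by positivity
  rw [show (x : ℂ) / 2 = ((x / 2 : ℝ) : ℂ) by push_cast; rfl]
  set K : ℝ → ℝ := fun τ => (besselI (I * τ) ((x / 2 : ℝ) : ℂ)).re / Real.cosh (π * τ)
  have hK (τ : ℝ) :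
      ‖K τ • g τ‖ ≤ Real.exp (x / 2) * (‖g τ‖ / √(Real.cosh (π * τ))) := by
    calc ‖K τ • g τ‖ = |K τ| * ‖g τ‖ := by rw [norm_smul, Real.norm_eq_abs]
      _ ≤ Real.exp (x / 2) / √(Real.cosh (π * τ)) * ‖g τ‖ := by
          gcongr
          exact abs_re_besselI_I_mul_div_cosh_le hx2 τ
      _ = Real.exp (x / 2) * (‖g τ‖ / √(Real.cosh (π * τ))) := by ring
  have hKm : Measurable K := (measurable_besselI_I_mul hx2).re.div (by fun_prop)
  have hmajorant := hg.const_mul (Real.exp (x / 2))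
  refine ⟨hmajorant.mono' (hKm.smul hgm).aestronglyMeasurable (ae_of_all _ hK), ?_⟩
  calc ‖(√π * Real.exp (-x / 2)) • ∫ τ, K τ • g τ‖
      = √π * Real.exp (-x / 2) * ‖∫ τ, K τ • g τ‖ := by
        rw [norm_smul, Real.norm_of_nonneg (by positivity)]
    _ ≤ √π * Real.exp (-x / 2) *
          ∫ τ, Real.exp (x / 2) * (‖g τ‖ / √(Real.cosh (π * τ))) := by
        gcongr
        exact norm_integral_le_of_norm_le hmajorant (ae_of_all _ hK)
    _ = √π * ∫ τ, ‖g τ‖ / √(Real.cosh (π * τ)) := by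
        rw [integral_const_mul, ← mul_assoc, mul_assoc √π, ← Real.exp_add, neg_div,
          neg_add_cancel, Real.exp_zero, mul_one]
end
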